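/- For a balanced word v = a_1⋯a_m, in the q-shuffle algebra one has (q·x⋆(vy) - q^{-1}·(vy)⋆x)/(q-q^{-1}) = q^{-1} ∑_{i=0}^m a_1⋯a_i x a_{i+1}⋯a_m y · [2 + 2ā_1 + 2ā_2 + ⋯ + 2ā_i]_q. -/

import Mathlib

open scoped Classical

inductive Letter | x | y
deriving DecidableEq

instance : Fintype Letter :=
  ⟨⟨[Letter.x, Letter.y], by simp⟩, fun a => by cases a <;> simp⟩

/-- x ↦ 1, y ↦ -1 -/
def bar : Letter → ℤ
  | .x => 1
  | .y => -1

/-- σ swaps the letters x and y. -/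
def sigma : Letter → Letter
  | .x => .y
  | .y => .x

/-- the pairing ⟨u,v⟩ : 2 if u = v, -2 otherwise. -/
def pair : Letter → Letter → ℤ := fun u v => if u = v then 2 else -2

noncomputable section

/-- The free associative algebra on the two letters x, y (with its word basis). -/
abbrev V (F : Type*) [Field F] := MonoidAlgebra F (FreeMonoid Letter)

variable {F : Type*} [Field F]

/-- the basis word of V corresponding to a list of letters -/
def wd (w : List Letter) : V F := MonoidAlgebra.single (FreeMonoid.ofList w) 1

/-- the q-shuffle product of two words, by the left recursion -/
def shuffleWord (q : F) : List Letter → List Letter → V F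
  | [], v => wd v
  | u1 :: ut, [] => wd (u1 :: ut)
  | u1 :: ut, v1 :: vt =>
      wd [u1] * shuffleWord q ut (v1 :: vt)
      + q ^ (((u1 :: ut).map (fun a => pair a v1)).sum) •
          (wd [v1] * shuffleWord q (u1 :: ut) vt)
termination_by u v => u.length + v.length

/-- the q-shuffle product on V, extended bilinearly -/
def shuffle (q : F) (a b : V F) : V F :=
  a.coeff.sum fun u cu => b.coeff.sum fun v cv =>
    (cu * cv) • shuffleWord q (FreeMonoid.toList u) (FreeMonoid.toList v)

/-- the quantum integer [m]_q -/
def qint (q : F) (m : ℤ) : F := (q ^ m - q ^ (-m)) / (q - q⁻¹)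

/-- the quantum factorial [m]_q! -/
def qfac (q : F) (m : ℤ) : F := ∏ j ∈ Finset.range m.toNat, qint q ((j : ℤ) + 1)

/-- e_i = ā_1 + ⋯ + ā_i, the i-th elevation of the word w -/
def esum (w : List Letter) (i : ℕ) : ℤ := ((w.take i).map bar).sum

/-- A word is Catalan when all partial sums of bar are nonnegative and the total is zero. -/
def IsCatalan (w : List Letter) : Prop :=
  (∀ i, i ≤ w.length → 0 ≤ esum w i) ∧ esum w w.length = 0

/-- the coefficient C(w) = ∏_{i=0}^{2n} [1 + e_i]_q -/
def Ccoef (q : F) (w : List Letter) : F :=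
  ∏ i ∈ Finset.range (w.length + 1), qint q (1 + esum w i)

/-- the n-th Catalan element C_n = ∑_{w ∈ Cat_n} C(w) w  -/
def catalanElt (q : F) (n : ℕ) : V F :=
  ∑ f : Fin (2 * n) → Letter,
    if IsCatalan (List.ofFn f) then Ccoef q (List.ofFn f) • wd (List.ofFn f) else 0

/-- the antiautomorphism ζ : reverse the word and swap x,y, extended linearly -/
def zeta (a : V F) : V F :=
  a.coeff.sum fun w c =>
    MonoidAlgebra.single (FreeMonoid.ofList (((FreeMonoid.toList w).map sigma).reverse)) c

/-- The profile of a word: delete from the elevation sequence every interior e_i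
    such that e_{i+1}-e_i and e_i-e_{i-1} have the same sign. -/
def profile (w : List Letter) : List ℤ :=
  (List.range (w.length + 1)).filterMap fun i =>
    if i = 0 ∨ i = w.length then some (esum w i)
    else if 0 < (esum w (i + 1) - esum w i) * (esum w i - esum w (i - 1)) then none
    else some (esum w i)

/-- The list (ℓ_0, h_1, ℓ_1, h_2, …, h_r, ℓ_r). -/
def P (r : ℕ) (ℓ h : ℕ → ℤ) : List ℤ :=
  List.ofFn fun i : Fin (2 * r + 1) =>
    if i.val % 2 = 0 then ℓ (i.val / 2) else h ((i.val + 1) / 2)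

/-- the word x^{h_1} y^{h_1-ℓ_1} x^{h_2-ℓ_1} y^{h_2-ℓ_2} ⋯ x^{h_r-ℓ_{r-1}} y^{h_r} -/
def explicitWord (r : ℕ) (ℓ h : ℕ → ℤ) : List Letter :=
  (List.range r).flatMap fun i =>
    List.replicate (h (i + 1) - ℓ i).toNat Letter.x ++
      List.replicate (h (i + 1) - ℓ (i + 1)).toNat Letter.y

/-- C(ℓ_0,h_1,…,h_r,ℓ_r), the ratio of q-factorials attached to a profile. -/
def Cprof (q : F) (r : ℕ) (ℓ h : ℕ → ℤ) : F :=
  (∏ i ∈ Finset.Icc 1 r, qfac q (h i) * qfac q (h i + 1)) /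
    (∏ i ∈ Finset.range (r + 1), qfac q (ℓ i) * qfac q (ℓ i + 1))

end


/-!
Shuffling a single letter `u` into a word `w` inserts `u` at every position `i`; the power of `q`
picked up is `2ū·e_i` from the left and `2ū·(e_m - e_i)` from the right, where `e_i` is the
elevation of `w` after `i` letters. Hence the `q`-commutator of `u` and `w` has coefficient
`(q^{1+2ūe_i} - q^{-1+2ū(e_m-e_i)})/(q-q⁻¹) = q^{ūe_m} [1 - ūe_m + 2ūe_i]_q` at position `i`.
For `u = x` and `w = vy` with `v` balanced, `e_m = -1`, and the last position carries `[0]_q = 0`.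
-/

section QShuffleLetter

variable {F : Type*} [Field F]

lemma wd_singleton_mul_wd (a : Letter) (l : List Letter) :
    (wd [a] : V F) * wd l = wd (a :: l) := by
  simp only [wd, MonoidAlgebra.single_mul_single, one_mul]
  rfl

lemma shuffle_wd_wd (q : F) (u w : List Letter) :
    shuffle q (wd u) (wd w) = shuffleWord q u w := by
  simp [shuffle, wd, MonoidAlgebra.coeff_single, Finsupp.sum_single_index]

lemma bar_x : bar Letter.x = 1 := rfl

lemma qint_zero (q : F) : qint q 0 = 0 := by simp [qint]

lemma pair_eq_mul_bar (a b : Letter) : pair a b = 2 * bar a * bar b := by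
  cases a <;> cases b <;> decide

lemma esum_zero (w : List Letter) : esum w 0 = 0 := by simp [esum]

lemma esum_cons_succ (a : Letter) (w : List Letter) (i : ℕ) :
    esum (a :: w) (i + 1) = bar a + esum w i := by simp [esum]

lemma esum_length (w : List Letter) : esum w w.length = (w.map bar).sum := by
  simp [esum]

lemma esum_append_of_le (v l : List Letter) {i : ℕ} (h : i ≤ v.length) :
    esum (v ++ l) i = esum v i := by
  simp [esum, List.take_append_of_le_length h]

lemma esum_append_singleton_length (v : List Letter) (a : Letter) :
    esum (v ++ [a]) (v ++ [a]).length = esum v v.length + bar a := by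
  rw [esum_length, esum_length]
  simp

lemma sum_map_pair_right (l : List Letter) (u : Letter) :
    (l.map fun a => pair a u).sum = 2 * bar u * esum l l.length := by
  induction l with
  | nil => simp [esum]
  | cons b t ih =>
    rw [List.map_cons, List.sum_cons, ih, List.length_cons, esum_cons_succ, pair_eq_mul_bar]
    ring

lemma shuffleWord_singleton_left (q : F) (hq0 : q ≠ 0) (u : Letter) (w : List Letter) :
    shuffleWord q [u] w = ∑ i ∈ Finset.range (w.length + 1),
      q ^ (2 * bar u * esum w i) • (wd (w.take i ++ u :: w.drop i) : V F) := by
  induction w with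
  | nil => simp [shuffleWord, esum]
  | cons v1 vt ih =>
    rw [shuffleWord, shuffleWord, ih, Finset.mul_sum, Finset.smul_sum, List.length_cons,
      Finset.sum_range_succ' _ (vt.length + 1), add_comm]
    congr 1
    · refine Finset.sum_congr rfl fun i _ => ?_
      rw [mul_smul_comm, smul_smul, wd_singleton_mul_wd, esum_cons_succ, ← zpow_add₀ hq0]
      simp only [List.map_cons, List.map_nil, List.sum_cons, List.sum_nil, pair_eq_mul_bar]
      congr 2
      ring
    · simp [esum_zero, wd_singleton_mul_wd]

lemma shuffleWord_singleton_right (q : F) (u : Letter) (w : List Letter) :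
    shuffleWord q w [u] = ∑ i ∈ Finset.range (w.length + 1),
      q ^ (2 * bar u * (esum w w.length - esum w i)) • (wd (w.take i ++ u :: w.drop i) : V F) := by
  induction w with
  | nil => simp [shuffleWord, esum]
  | cons u1 ut ih =>
    rw [shuffleWord, shuffleWord, ih, Finset.mul_sum, List.length_cons,
      Finset.sum_range_succ' _ (ut.length + 1)]
    congr 1
    · refine Finset.sum_congr rfl fun i _ => ?_
      rw [mul_smul_comm, wd_singleton_mul_wd, esum_cons_succ, esum_cons_succ]
      congr 2
      ring
    · rw [sum_map_pair_right, esum_zero, sub_zero, wd_singleton_mul_wd]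
      rfl

/-- The exponents `1 + 2a` and `-1 + 2(E - a)` are symmetric about `E`. -/
lemma qCommutator_coeff (q : F) (hq0 : q ≠ 0) (E a : ℤ) :
    (q - q⁻¹)⁻¹ * (q * q ^ (2 * a) - q⁻¹ * q ^ (2 * (E - a)))
      = q ^ E * qint q (1 - E + 2 * a) := by
  have hleft : q * q ^ (2 * a) = q ^ E * q ^ (1 - E + 2 * a) := by
    rw [← zpow_one_add₀ hq0, ← zpow_add₀ hq0]
    ring_nf
  have hright : q⁻¹ * q ^ (2 * (E - a)) = q ^ E * q ^ (-(1 - E + 2 * a)) := by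
    rw [← zpow_neg_one, ← zpow_add₀ hq0, ← zpow_add₀ hq0]
    ring_nf
  rw [hleft, hright, qint, ← mul_sub]
  ring

lemma qCommutator_singleton (q : F) (hq0 : q ≠ 0) (u : Letter) (w : List Letter) :
    (q - q⁻¹)⁻¹ • (q • shuffle q (wd [u]) (wd w) - q⁻¹ • shuffle q (wd w) (wd [u]))
      = q ^ (bar u * esum w w.length) • ∑ i ∈ Finset.range (w.length + 1),
          qint q (1 - bar u * esum w w.length + 2 * (bar u * esum w i)) •
            (wd (w.take i ++ u :: w.drop i) : V F) := by
  rw [shuffle_wd_wd, shuffle_wd_wd, shuffleWord_singleton_left q hq0,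
    shuffleWord_singleton_right]
  simp only [Finset.smul_sum, ← Finset.sum_sub_distrib, smul_smul, ← sub_smul]
  refine Finset.sum_congr rfl fun i _ => ?_
  rw [← qCommutator_coeff q hq0]
  ring_nf

end QShuffleLetter

theorem stmt10_general {F : Type*} [Field F] (q : F) (hq0 : q ≠ 0)
    (v : List Letter) (hv : esum v v.length = 0) :
    (q - q⁻¹)⁻¹ • (q • shuffle q (wd [Letter.x]) (wd (v ++ [Letter.y]))
        - q⁻¹ • shuffle q (wd (v ++ [Letter.y])) (wd [Letter.x]))
      = q⁻¹ • ∑ i ∈ Finset.range (v.length + 1),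
          qint q (2 + 2 * esum v i) •
            (wd (v.take i ++ Letter.x :: (v.drop i ++ [Letter.y])) : V F) := by
  have htotal : esum (v ++ [Letter.y]) (v ++ [Letter.y]).length = -1 := by
    rw [esum_append_singleton_length, hv]
    rfl
  rw [qCommutator_singleton q hq0, Finset.sum_range_succ, htotal, List.length_append,
    List.length_singleton]
  norm_num [bar_x, qint_zero]
  refine congrArg _ (Finset.sum_congr rfl fun i hi => ?_)
  have hiv : i ≤ v.length := Finset.mem_range_succ_iff.mp hi
  rw [esum_append_of_le v _ hiv, List.take_append_of_le_length hiv,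
    List.drop_append_of_le_length hiv]

theorem stmt10 {F : Type*} [Field F] (q : F) (hq0 : q ≠ 0)
    (hq : ∀ k : ℕ, 0 < k → q ^ k ≠ 1) (v : List Letter) (hv : esum v v.length = 0) :
    (q - q⁻¹)⁻¹ • (q • shuffle q (wd [Letter.x]) (wd (v ++ [Letter.y]))
        - q⁻¹ • shuffle q (wd (v ++ [Letter.y])) (wd [Letter.x]))
      = q⁻¹ • ∑ i ∈ Finset.range (v.length + 1),
          qint q (2 + 2 * esum v i) •
            (wd (v.take i ++ Letter.x :: (v.drop i ++ [Letter.y])) : V F) :=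
  stmt10_general q hq0 v hv
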